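/- arXiv:2605.15603 — 4 statements merged into one kernel-verified Lean document; each statement's English description precedes it below -/
import Mathlib

section
/- Let S be a type, P : S → S → ℝ a stochastic matrix, c : S → ℝ bounded, γ ∈ (0,1), and ν a sub-probability measure on the positive integers. Then for every bounded function Q₀ : S → ℝ, the iterates Q_{n+1} = T^ν Q_n defined by the ν-Bellman operator converge uniformly to the value function Q^π, i.e., sup_{x ∈ S} |Q_n(x) − Q^π(x)| → 0 as n → ∞. -/
/-- `ξ^ν(k) = γ^(k−1) − ∑_{κ=0}^{k−1} γ^κ · ν(k−κ)`. -/
noncomputable def xiNu (γ : ℝ) (ν : ℕ → ℝ) (k : ℕ) : ℝ :=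
  γ ^ (k - 1) - ∑ κ ∈ Finset.range k, γ ^ κ * ν (k - κ)

/-- A sub-probability measure on the positive integers. -/
def IsSubProbPNat (ν : ℕ → ℝ) : Prop :=
  ν 0 = 0 ∧ (∀ k, 0 ≤ ν k) ∧ Summable ν ∧ ∑' k, ν k ≤ 1

/-!
Chapman–Kolmogorov turns `∑_y P^{k+1}(x,y) Q^π(y)` into `∑_j γ^j (P^{k+j+1} c)(x)`, so the
`ν`-part of `T^ν Q^π` is the Cauchy product of `ν(· + 1)` with the geometric weights, tested
against `P^{n+1} c`. Its `n`-th coefficient is exactly what `ξ^ν(n+1)` subtracts from `γ^n`, so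
`T^ν Q^π = c + γ ∑_n γ^n P^{n+1} c = Q^π`. On bounded functions
`T^ν Q - T^ν Q' = γ ∑_k ν(k+1) P^{k+1}(Q - Q')` and `∑ ν ≤ 1`, so `T^ν` is a `γ`-contraction in
the sup norm around its fixed point and `|Q_n - Q^π| ≤ γ^n sup |Q_0 - Q^π|`.
-/

open Finset Filter Topology

section Series

variable {ι : Type*} {a b : ι → ℝ} {B : ℝ}

theorem norm_mul_le_mul_of_abs_le (ha : 0 ≤ a) (hb : ∀ i, |b i| ≤ B) (i : ι) :
    ‖a i * b i‖ ≤ a i * B := by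
  rw [Real.norm_eq_abs, abs_mul, abs_of_nonneg (ha i)]
  exact mul_le_mul_of_nonneg_left (hb i) (ha i)

theorem summable_mul_of_abs_le (ha : Summable a) (ha0 : 0 ≤ a) (hb : ∀ i, |b i| ≤ B) :
    Summable fun i => a i * b i :=
  (ha.mul_right B).of_norm_bounded (norm_mul_le_mul_of_abs_le ha0 hb)

theorem abs_tsum_mul_le_of_abs_le (ha : Summable a) (ha0 : 0 ≤ a) (hb : ∀ i, |b i| ≤ B) :
    |∑' i, a i * b i| ≤ (∑' i, a i) * B :=
  tsum_of_norm_bounded (ha.hasSum.mul_right B) (norm_mul_le_mul_of_abs_le ha0 hb)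

theorem hasSum_sum_antidiagonal {F : ℕ × ℕ → ℝ} (hF : Summable F) :
    HasSum (fun n => ∑ kl ∈ antidiagonal n, F kl) (∑' p, F p) := by
  have hσ := (HasAntidiagonal.sigmaAntidiagonalEquivProd.hasSum_iff (f := F)).2 hF.hasSum
  refine hσ.sigma fun n => ?_
  have hn := hasSum_fintype fun kl : antidiagonal n => F kl
  rwa [sum_coe_sort] at hn

theorem hasSum_sum_range_mul_of_abs_le {f g h : ℕ → ℝ} (hf : Summable f) (hg : Summable g)
    (hf0 : 0 ≤ f) (hg0 : 0 ≤ g) (hh : ∀ n, |h n| ≤ B) :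
    HasSum (fun n => (∑ i ∈ range (n + 1), f i * g (n - i)) * h n)
      (∑' k, f k * ∑' j, g j * h (k + j)) := by
  have hF : Summable fun p : ℕ × ℕ => f p.1 * g p.2 * h (p.1 + p.2) :=
    summable_mul_of_abs_le (hf.mul_of_nonneg hg hf0 hg0)
      (fun p => mul_nonneg (hf0 p.1) (hg0 p.2)) fun p => hh (p.1 + p.2)
  convert hasSum_sum_antidiagonal hF using 1
  · funext n
    rw [Nat.sum_antidiagonal_eq_sum_range_succ_mk, sum_mul]
    refine sum_congr rfl fun i hi => ?_
    rw [Nat.add_sub_of_le (Nat.lt_succ_iff.mp (mem_range.mp hi))]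
  · rw [hF.tsum_prod]
    simp_rw [← tsum_mul_left, mul_assoc]

end Series

structure IsStochastic {S : Type*} (K : S → S → ℝ) : Prop where
  nonneg : ∀ x y, 0 ≤ K x y
  summable : ∀ x, Summable (K x)
  tsum_eq_one : ∀ x, ∑' y, K x y = 1

namespace IsStochastic

variable {S : Type*} {K L : S → S → ℝ} {g : S → ℝ} {B : ℝ}

theorem summable_mul (hK : IsStochastic K) (hg : ∀ y, |g y| ≤ B) (x : S) :
    Summable fun y => K x y * g y :=
  summable_mul_of_abs_le (hK.summable x) (hK.nonneg x) hg

theorem abs_tsum_mul_le (hK : IsStochastic K) (hg : ∀ y, |g y| ≤ B) (x : S) :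
    |∑' y, K x y * g y| ≤ B := by
  simpa [hK.tsum_eq_one x] using abs_tsum_mul_le_of_abs_le (hK.summable x) (hK.nonneg x) hg

theorem summable_prod_mul (hK : IsStochastic K) (hL : IsStochastic L) (x : S) :
    Summable fun p : S × S => K x p.1 * L p.1 p.2 := by
  have hnonneg : 0 ≤ fun p : S × S => K x p.1 * L p.1 p.2 :=
    fun p => mul_nonneg (hK.nonneg _ _) (hL.nonneg _ _)
  refine (summable_prod_of_nonneg hnonneg).2 ⟨fun z => (hL.summable z).mul_left (K x z), ?_⟩
  convert hK.summable x using 1 with z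
  funext z
  simp only [tsum_mul_left, hL.tsum_eq_one, mul_one]

theorem comp (hK : IsStochastic K) (hL : IsStochastic L) :
    IsStochastic fun x y => ∑' z, K x z * L z y where
  nonneg x y := tsum_nonneg fun z => mul_nonneg (hK.nonneg x z) (hL.nonneg z y)
  summable x := (hK.summable_prod_mul hL x).prod_symm.prod
  tsum_eq_one x := by
    rw [Summable.tsum_comm (f := fun z y => K x z * L z y) (hK.summable_prod_mul hL x)]
    simpa only [tsum_mul_left, hL.tsum_eq_one, mul_one] using hK.tsum_eq_one x

theorem tsum_comp_mul (hK : IsStochastic K) (hL : IsStochastic L) (hg : ∀ y, |g y| ≤ B)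
    (x : S) : ∑' y, (∑' z, K x z * L z y) * g y = ∑' z, K x z * ∑' y, L z y * g y := by
  have hsum : Summable fun p : S × S => K x p.1 * (L p.1 p.2 * g p.2) := by
    simpa only [mul_assoc] using summable_mul_of_abs_le (hK.summable_prod_mul hL x)
      (fun p => mul_nonneg (hK.nonneg _ _) (hL.nonneg _ _)) fun p => hg p.2
  simp_rw [← tsum_mul_right, ← tsum_mul_left, mul_assoc]
  exact Summable.tsum_comm (f := fun z y => K x z * (L z y * g y)) hsum

theorem tsum_mul_tsum_comm (hK : IsStochastic K) {a : ℕ → ℝ} (ha : Summable a) (ha0 : 0 ≤ a)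
    {h : ℕ → S → ℝ} (hh : ∀ j y, |h j y| ≤ B) (x : S) :
    ∑' y, K x y * ∑' j, a j * h j y = ∑' j, a j * ∑' y, K x y * h j y := by
  have hsum : Summable fun p : S × ℕ => K x p.1 * (a p.2 * h p.2 p.1) := by
    simpa only [mul_assoc] using summable_mul_of_abs_le
      ((hK.summable x).mul_of_nonneg ha (hK.nonneg x) ha0)
      (fun p => mul_nonneg (hK.nonneg _ _) (ha0 _)) fun p => hh p.2 p.1
  simp_rw [← tsum_mul_left, mul_left_comm (a _)]
  exact (Summable.tsum_comm (f := fun y j => K x y * (a j * h j y)) hsum).symm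

end IsStochastic

section KernelPow

variable {S : Type*} [DecidableEq S] {P : S → S → ℝ}

noncomputable def kernelPow (P : S → S → ℝ) : ℕ → S → S → ℝ
  | 0 => fun x y => if x = y then 1 else 0
  | k + 1 => fun x y => ∑' z, P x z * kernelPow P k z y

theorem eq_kernelPow {Pk : ℕ → S → S → ℝ} (hPk_zero : ∀ x y, Pk 0 x y = if x = y then 1 else 0)
    (hPk_succ : ∀ k x y, Pk (k + 1) x y = ∑' z, P x z * Pk k z y) : Pk = kernelPow P := by
  funext k x y
  induction k generalizing x y with
  | zero => exact hPk_zero x y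
  | succ k ih => simp only [hPk_succ, ih, kernelPow]

theorem tsum_kernelPow_zero_mul (g : S → ℝ) (x : S) :
    ∑' y, kernelPow P 0 x y * g y = g x := by
  simp [kernelPow]

theorem IsStochastic.kernelPow (hP : IsStochastic P) (k : ℕ) : IsStochastic (kernelPow P k) := by
  induction k with
  | zero =>
    refine ⟨fun x y => by simp only [_root_.kernelPow]; positivity, fun x => ?_, fun x => ?_⟩
    · exact summable_of_ne_finset_zero (s := {x}) fun y hy => by
        simp [_root_.kernelPow, Ne.symm (notMem_singleton.1 hy)]
    · simpa using tsum_kernelPow_zero_mul (P := P) (fun _ => 1) x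
  | succ k ih => exact hP.comp ih

theorem tsum_kernelPow_mul_tsum_kernelPow_mul (hP : IsStochastic P) {g : S → ℝ} {B : ℝ}
    (hg : ∀ y, |g y| ≤ B) (n m : ℕ) (x : S) :
    ∑' y, kernelPow P n x y * ∑' z, kernelPow P m y z * g z =
      ∑' z, kernelPow P (n + m) x z * g z := by
  induction n generalizing x with
  | zero => rw [tsum_kernelPow_zero_mul, zero_add]
  | succ n ih =>
    have hPn := hP.kernelPow n
    calc ∑' y, kernelPow P (n + 1) x y * ∑' z, kernelPow P m y z * g z
        = ∑' w, P x w * ∑' y, kernelPow P n w y * ∑' z, kernelPow P m y z * g z :=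
          hP.tsum_comp_mul hPn ((hP.kernelPow m).abs_tsum_mul_le hg) x
      _ = ∑' w, P x w * ∑' z, kernelPow P (n + m) w z * g z := by simp only [ih]
      _ = ∑' z, kernelPow P (n + 1 + m) x z * g z := by
          rw [Nat.add_right_comm]
          exact (hP.tsum_comp_mul (hP.kernelPow (n + m)) hg x).symm

end KernelPow

theorem xiNu_succ (γ : ℝ) (ν : ℕ → ℝ) (k : ℕ) :
    xiNu γ ν (k + 1) = γ ^ k - ∑ i ∈ range (k + 1), ν (i + 1) * γ ^ (k - i) := by
  rw [xiNu, Nat.add_sub_cancel, ← sum_range_reflect]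
  congr 1
  refine sum_congr rfl fun i hi => ?_
  have hik : i < k + 1 := mem_range.mp hi
  rw [show k + 1 - 1 - i = k - i by omega, show k + 1 - (k - i) = i + 1 by omega, mul_comm]

namespace IsSubProbPNat

variable {ν : ℕ → ℝ} {b : ℕ → ℝ} {B : ℝ}

theorem nonneg (hν : IsSubProbPNat ν) (k : ℕ) : 0 ≤ ν k := hν.2.1 k

theorem summable_succ (hν : IsSubProbPNat ν) : Summable fun k => ν (k + 1) :=
  (summable_nat_add_iff 1).2 hν.2.2.1

theorem tsum_succ_le_one (hν : IsSubProbPNat ν) : ∑' k, ν (k + 1) ≤ 1 := by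
  have h := hν.2.2.1.tsum_eq_zero_add
  rw [hν.1, zero_add] at h
  exact h ▸ hν.2.2.2

theorem summable_succ_mul (hν : IsSubProbPNat ν) (hb : ∀ k, |b k| ≤ B) :
    Summable fun k => ν (k + 1) * b k :=
  summable_mul_of_abs_le hν.summable_succ (fun k => hν.nonneg (k + 1)) hb

theorem hasSum_sum_range_mul {γ : ℝ} (hν : IsSubProbPNat ν) (hγ0 : 0 ≤ γ) (hγ1 : γ < 1)
    (hb : ∀ k, |b k| ≤ B) :
    HasSum (fun n => (∑ i ∈ range (n + 1), ν (i + 1) * γ ^ (n - i)) * b n)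
      (∑' k, ν (k + 1) * ∑' j, γ ^ j * b (k + j)) :=
  hasSum_sum_range_mul_of_abs_le hν.summable_succ (summable_geometric_of_lt_one hγ0 hγ1)
    (fun k => hν.nonneg (k + 1)) (fun j => pow_nonneg hγ0 j) hb

theorem summable_xiNu_succ_mul {γ : ℝ} (hν : IsSubProbPNat ν) (hγ0 : 0 ≤ γ) (hγ1 : γ < 1)
    (hb : ∀ k, |b k| ≤ B) : Summable fun k => xiNu γ ν (k + 1) * b k := by
  simp_rw [xiNu_succ, sub_mul]
  exact (summable_mul_of_abs_le (summable_geometric_of_lt_one hγ0 hγ1)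
    (fun k => pow_nonneg hγ0 k) hb).sub (hν.hasSum_sum_range_mul hγ0 hγ1 hb).summable

end IsSubProbPNat

section Bellman

variable {S : Type*} [DecidableEq S]

noncomputable def valueFn (P : S → S → ℝ) (c : S → ℝ) (γ : ℝ) (x : S) : ℝ :=
  ∑' k, γ ^ k * ∑' y, kernelPow P k x y * c y

noncomputable def nuBellman (P : S → S → ℝ) (c : S → ℝ) (γ : ℝ) (ν : ℕ → ℝ) (Q : S → ℝ)
    (x : S) : ℝ :=
  c x + γ * ∑' k, (xiNu γ ν (k + 1) * ∑' y, kernelPow P (k + 1) x y * c y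
    + ν (k + 1) * ∑' y, kernelPow P (k + 1) x y * Q y)

variable {P : S → S → ℝ} {c : S → ℝ} {C γ : ℝ} {ν : ℕ → ℝ}

theorem abs_valueFn_le (hP : IsStochastic P) (hc : ∀ x, |c x| ≤ C) (hγ0 : 0 ≤ γ) (hγ1 : γ < 1)
    (x : S) : |valueFn P c γ x| ≤ (1 - γ)⁻¹ * C := by
  rw [← tsum_geometric_of_lt_one hγ0 hγ1]
  exact abs_tsum_mul_le_of_abs_le (summable_geometric_of_lt_one hγ0 hγ1)
    (fun k => pow_nonneg hγ0 k) fun k => (hP.kernelPow k).abs_tsum_mul_le hc x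

theorem tsum_kernelPow_mul_valueFn (hP : IsStochastic P) (hc : ∀ x, |c x| ≤ C) (hγ0 : 0 ≤ γ)
    (hγ1 : γ < 1) (m : ℕ) (x : S) :
    ∑' y, kernelPow P m x y * valueFn P c γ y =
      ∑' j, γ ^ j * ∑' y, kernelPow P (m + j) x y * c y := by
  simp only [valueFn]
  rw [(hP.kernelPow m).tsum_mul_tsum_comm (summable_geometric_of_lt_one hγ0 hγ1)
    (fun j => pow_nonneg hγ0 j) (fun j y => (hP.kernelPow j).abs_tsum_mul_le hc y) x]
  simp only [tsum_kernelPow_mul_tsum_kernelPow_mul hP hc]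

theorem nuBellman_valueFn (hP : IsStochastic P) (hc : ∀ x, |c x| ≤ C) (hγ0 : 0 ≤ γ)
    (hγ1 : γ < 1) (hν : IsSubProbPNat ν) : nuBellman P c γ ν (valueFn P c γ) = valueFn P c γ := by
  funext x
  set V : ℕ → ℝ := fun k => ∑' y, kernelPow P k x y * c y
  have hV : ∀ k, |V k| ≤ C := fun k => (hP.kernelPow k).abs_tsum_mul_le hc x
  have hgeo : Summable fun k => γ ^ k * V (k + 1) :=
    summable_mul_of_abs_le (summable_geometric_of_lt_one hγ0 hγ1) (fun k => pow_nonneg hγ0 k)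
      fun k => hV (k + 1)
  have hconv := hν.hasSum_sum_range_mul hγ0 hγ1 fun k => hV (k + 1)
  have hshift : ∀ k, ∑' y, kernelPow P (k + 1) x y * valueFn P c γ y =
      ∑' j, γ ^ j * V (k + j + 1) := fun k => by
    rw [tsum_kernelPow_mul_valueFn hP hc hγ0 hγ1]
    simp only [V, Nat.add_right_comm k 1]
  have hν_term := (hν.summable_succ_mul fun k =>
    (hP.kernelPow (k + 1)).abs_tsum_mul_le (abs_valueFn_le hP hc hγ0 hγ1) x).hasSum
  simp only [hshift] at hν_term
  have hsum : HasSum (fun k => xiNu γ ν (k + 1) * V (k + 1)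
      + ν (k + 1) * ∑' y, kernelPow P (k + 1) x y * valueFn P c γ y) (∑' k, γ ^ k * V (k + 1)) := by
    have h := (hgeo.hasSum.sub hconv).add hν_term
    rw [sub_add_cancel] at h
    simpa only [hshift, xiNu_succ, sub_mul] using h
  have hval : Summable fun k => γ ^ k * V k :=
    summable_mul_of_abs_le (summable_geometric_of_lt_one hγ0 hγ1) (fun k => pow_nonneg hγ0 k) hV
  show c x + γ * ∑' k, _ = ∑' k, γ ^ k * V k
  rw [hsum.tsum_eq, hval.tsum_eq_zero_add, ← tsum_mul_left]
  simp only [V, tsum_kernelPow_zero_mul, pow_succ', pow_zero, one_mul, mul_assoc]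

theorem abs_nuBellman_sub_le (hP : IsStochastic P) (hc : ∀ x, |c x| ≤ C) (hγ0 : 0 ≤ γ)
    (hγ1 : γ < 1) (hν : IsSubProbPNat ν) {Q Q' : S → ℝ} {B D : ℝ} (hQ' : ∀ y, |Q' y| ≤ B)
    (hQQ' : ∀ y, |Q y - Q' y| ≤ D) (x : S) :
    |nuBellman P c γ ν Q x - nuBellman P c γ ν Q' x| ≤ γ * D := by
  have hQ : ∀ y, |Q y| ≤ D + B := fun y => by
    simpa using (abs_add_le (Q y - Q' y) (Q' y)).trans (add_le_add (hQQ' y) (hQ' y))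
  have hxi := hν.summable_xiNu_succ_mul hγ0 hγ1 fun k =>
    (hP.kernelPow (k + 1)).abs_tsum_mul_le hc x
  have hν_term : ∀ {R : S → ℝ} {B' : ℝ}, (∀ y, |R y| ≤ B') →
      Summable fun k => ν (k + 1) * ∑' y, kernelPow P (k + 1) x y * R y := fun hR =>
    hν.summable_succ_mul fun k => (hP.kernelPow (k + 1)).abs_tsum_mul_le hR x
  have hdiff : nuBellman P c γ ν Q x - nuBellman P c γ ν Q' x =
      γ * ∑' k, ν (k + 1) * ∑' y, kernelPow P (k + 1) x y * (Q y - Q' y) := by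
    rw [nuBellman, nuBellman, add_sub_add_left_eq_sub, ← mul_sub,
      ← (hxi.add (hν_term hQ)).tsum_sub (hxi.add (hν_term hQ'))]
    congr 1
    refine tsum_congr fun k => ?_
    rw [add_sub_add_left_eq_sub, ← mul_sub, ← ((hP.kernelPow _).summable_mul hQ x).tsum_sub
      ((hP.kernelPow _).summable_mul hQ' x)]
    simp only [mul_sub]
  have hD : 0 ≤ D := (abs_nonneg _).trans (hQQ' x)
  rw [hdiff, abs_mul, abs_of_nonneg hγ0]
  refine mul_le_mul_of_nonneg_left ?_ hγ0
  calc |∑' k, ν (k + 1) * ∑' y, kernelPow P (k + 1) x y * (Q y - Q' y)|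
      ≤ (∑' k, ν (k + 1)) * D :=
        abs_tsum_mul_le_of_abs_le hν.summable_succ (fun k => hν.nonneg _) fun k =>
          (hP.kernelPow (k + 1)).abs_tsum_mul_le hQQ' x
    _ ≤ D := mul_le_of_le_one_left hD hν.tsum_succ_le_one

end Bellman

theorem tendsto_iSup_abs_of_abs_le_pow_mul {ι : Type*} {f : ℕ → ι → ℝ} {γ D : ℝ} (hγ0 : 0 ≤ γ)
    (hγ1 : γ < 1) (hf : ∀ n i, |f n i| ≤ γ ^ n * D) :
    Tendsto (fun n => ⨆ i, |f n i|) atTop (𝓝 0) := by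
  rcases isEmpty_or_nonempty ι with hι | ⟨⟨i⟩⟩
  · simpa only [Real.iSup_of_isEmpty] using tendsto_const_nhds
  have hD : 0 ≤ D := by simpa using (abs_nonneg _).trans (hf 0 i)
  refine squeeze_zero (fun n => Real.iSup_nonneg fun i => abs_nonneg _)
    (fun n => Real.iSup_le (hf n) (mul_nonneg (pow_nonneg hγ0 n) hD)) ?_
  simpa using (tendsto_pow_atTop_nhds_zero_of_lt_one hγ0 hγ1).mul_const D

/-- For every bounded `Q₀`, the iterates of the ν-Bellman operator converge
uniformly to the value function `Q^π`. -/
theorem nuBellman_iterates_tendsto_value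
    {S : Type*} [DecidableEq S] (P : S → S → ℝ)
    (hP_nonneg : ∀ x y, 0 ≤ P x y)
    (hP_summable : ∀ x, Summable (P x))
    (hP_sum : ∀ x, ∑' y, P x y = 1)
    (Pk : ℕ → S → S → ℝ)
    (hPk_zero : ∀ x y, Pk 0 x y = if x = y then 1 else 0)
    (hPk_succ : ∀ k x y, Pk (k + 1) x y = ∑' z, P x z * Pk k z y)
    (c : S → ℝ) (hc : ∃ C, ∀ x, |c x| ≤ C)
    (γ : ℝ) (hγ : γ ∈ Set.Ioo (0 : ℝ) 1)
    (ν : ℕ → ℝ) (hν : IsSubProbPNat ν)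
    (Qpi : S → ℝ)
    (hQpi : ∀ x, Qpi x = ∑' k : ℕ, γ ^ k * ∑' y, Pk k x y * c y)
    (T : (S → ℝ) → S → ℝ)
    (hT : ∀ Q x, T Q x = c x + γ * ∑' k : ℕ,
      (xiNu γ ν (k + 1) * ∑' y, Pk (k + 1) x y * c y
        + ν (k + 1) * ∑' y, Pk (k + 1) x y * Q y))
    (Q : ℕ → S → ℝ) (hQ0 : ∃ B, ∀ x, |Q 0 x| ≤ B)
    (hQrec : ∀ n, Q (n + 1) = T (Q n)) :
    Filter.Tendsto (fun n => ⨆ x, |Q n x - Qpi x|) Filter.atTop (nhds 0) := by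
  obtain ⟨hγ0, hγ1⟩ := hγ
  obtain ⟨C, hC⟩ := hc
  obtain ⟨B, hB⟩ := hQ0
  have hP : IsStochastic P := ⟨hP_nonneg, hP_summable, hP_sum⟩
  obtain rfl := eq_kernelPow hPk_zero hPk_succ
  obtain rfl : Qpi = valueFn P c γ := funext hQpi
  obtain rfl : T = nuBellman P c γ ν := funext fun Q => funext (hT Q)
  have hV := abs_valueFn_le hP hC hγ0.le hγ1
  refine tendsto_iSup_abs_of_abs_le_pow_mul hγ0.le hγ1 (D := B + (1 - γ)⁻¹ * C) fun n => ?_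
  induction n with
  | zero => simpa using fun x => (abs_sub _ _).trans (add_le_add (hB x) (hV x))
  | succ n ih =>
    intro x
    rw [hQrec, ← nuBellman_valueFn hP hC hγ0.le hγ1 hν, pow_succ', mul_assoc]
    exact abs_nuBellman_sub_le hP hC hγ0.le hγ1 hν hV ih x
end

section
/- Let λ ∈ [0,1], γ ∈ (0,1), and let K ≥ 1 be an integer. Let ν be the winsorized geometric measure: ν(k) = (1−λ)·(λγ)^(k−1) for 1 ≤ k < K, ν(K) = (λγ)^(K−1), and ν(k) = 0 otherwise. Then ξ^ν(k) = λ·(λγ)^(k−1) for 1 ≤ k < K and ξ^ν(k) = 0 for every k ≥ K. -/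
lemma xiNu_rec (γ : ℝ) (ν : ℕ → ℝ) (k : ℕ) (hk : 1 ≤ k) :
    xiNu γ ν (k + 1) = γ * xiNu γ ν k - ν (k + 1) := by
  obtain ⟨m, rfl⟩ := Nat.exists_eq_add_of_le hk
  unfold xiNu
  rw [Finset.sum_range_succ']
  have hs : ∑ κ ∈ Finset.range (1 + m), γ ^ (κ + 1) * ν (1 + m + 1 - (κ + 1)) =
      γ * ∑ κ ∈ Finset.range (1 + m), γ ^ κ * ν (1 + m - κ) := by
    rw [Finset.mul_sum]
    refine Finset.sum_congr rfl fun κ _ => ?_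
    have e : 1 + m + 1 - (κ + 1) = 1 + m - κ := by omega
    rw [e]; ring
  rw [hs]
  have e1 : 1 + m + 1 - 1 = m + 1 := by omega
  have e2 : 1 + m - 1 = m := by omega
  have e3 : 1 + m + 1 - 0 = 1 + m + 1 := by omega
  rw [e1, e2, e3]
  simp only [pow_zero, one_mul]
  ring

/-- For the winsorized geometric measure, `ξ^ν(k) = λ(λγ)^(k−1)` for
`1 ≤ k < K` and `ξ^ν(k) = 0` for `k ≥ K`. -/
theorem winsorizedGeometric_xi
    (lam γ : ℝ) (hlam : lam ∈ Set.Icc (0 : ℝ) 1) (hγ : γ ∈ Set.Ioo (0 : ℝ) 1)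
    (K : ℕ) (hK : 1 ≤ K) (ν : ℕ → ℝ)
    (hν : ∀ k, ν k = if 1 ≤ k ∧ k < K then (1 - lam) * (lam * γ) ^ (k - 1)
      else if k = K then (lam * γ) ^ (K - 1) else 0) :
    (∀ k, 1 ≤ k → k < K → xiNu γ ν k = lam * (lam * γ) ^ (k - 1)) ∧
    (∀ k, K ≤ k → xiNu γ ν k = 0) := by
  have key : ∀ k, 1 ≤ k →
      xiNu γ ν k = if k < K then lam * (lam * γ) ^ (k - 1) else 0 := by
    intro k hk
    induction k with
    | zero => omega
    | succ n ih =>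
      rcases Nat.eq_zero_or_pos n with rfl | hn
      · -- k = 1
        have h1 : xiNu γ ν 1 = 1 - ν 1 := by simp [xiNu]
        rw [h1, hν 1]
        rcases lt_or_ge 1 K with h | h
        · rw [if_pos ⟨le_refl 1, h⟩, if_pos h]
          simp
        · have hK1 : K = 1 := by omega
          have hc : ¬ (1 ≤ 1 ∧ 1 < K) := by omega
          rw [if_neg hc, if_pos hK1.symm, if_neg (by omega), hK1]
          simp
      · rw [xiNu_rec γ ν n hn, ih hn, hν (n + 1)]
        obtain ⟨m, rfl⟩ : ∃ m, n = m + 1 := ⟨n - 1, by omega⟩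
        rcases lt_trichotomy (m + 2) K with h | h | h
        · rw [if_pos (show m + 1 < K by omega),
            if_pos (show 1 ≤ m + 1 + 1 ∧ m + 1 + 1 < K from ⟨by omega, h⟩),
            if_pos (show m + 1 + 1 < K from h)]
          simp only [Nat.add_sub_cancel]
          ring
        · rw [if_pos (show m + 1 < K by omega),
            if_neg (show ¬ (1 ≤ m + 1 + 1 ∧ m + 1 + 1 < K) by omega),
            if_pos (show m + 1 + 1 = K from h),
            if_neg (show ¬ (m + 1 + 1 < K) by omega),
            show K - 1 = m + 1 by omega]
          simp only [Nat.add_sub_cancel]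
          ring
        · rw [if_neg (show ¬ (m + 1 < K) by omega),
            if_neg (show ¬ (1 ≤ m + 1 + 1 ∧ m + 1 + 1 < K) by omega),
            if_neg (show m + 1 + 1 ≠ K by omega),
            if_neg (show ¬ (m + 1 + 1 < K) by omega)]
          ring
  constructor
  · intro k hk hkK
    rw [key k hk, if_pos hkK]
  · intro k hkK
    rw [key k (le_trans hK hkK), if_neg (by omega)]
end

section
/- Let λ ∈ [0,1], γ ∈ (0,1), and let K ≥ 1 be an integer. Let ν be the winsorized geometric measure (ν(k) = (1−λ)·(λγ)^(k−1) for 1 ≤ k < K, ν(K) = (λγ)^(K−1), ν(k) = 0 otherwise) and let p_H be the winsorized geometric distribution (p_H(n) = (1−λγ)·(λγ)^(n−1) for 1 ≤ n < K, p_H(K) = (λγ)^(K−1), p_H(n) = 0 otherwise). Then the importance weights w_ξ(n) = λ/(1−λγ) for 1 ≤ n < K with w_ξ(K) = 0, and w_ν(n) = (1−λ)/(1−λγ) for 1 ≤ n < K with w_ν(K) = 1, satisfy ξ^ν(n) = w_ξ(n)·p_H(n) and ν(n) = w_ν(n)·p_H(n) for every n with 1 ≤ n ≤ K. -/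
/-- The importance weights `w_ξ` and `w_ν` of the winsorized geometric
distribution satisfy `ξ^ν(n) = w_ξ(n)·p_H(n)` and `ν(n) = w_ν(n)·p_H(n)` for
all `1 ≤ n ≤ K`. -/
theorem winsorizedGeometric_importance_weights
    (lam γ : ℝ) (hlam : lam ∈ Set.Icc (0 : ℝ) 1) (hγ : γ ∈ Set.Ioo (0 : ℝ) 1)
    (K : ℕ) (hK : 1 ≤ K) (ν pH wxi wnu : ℕ → ℝ)
    (hν : ∀ k, ν k = if 1 ≤ k ∧ k < K then (1 - lam) * (lam * γ) ^ (k - 1)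
      else if k = K then (lam * γ) ^ (K - 1) else 0)
    (hpH : ∀ n, pH n = if 1 ≤ n ∧ n < K then (1 - lam * γ) * (lam * γ) ^ (n - 1)
      else if n = K then (lam * γ) ^ (K - 1) else 0)
    (hwxi : ∀ n, wxi n = if n < K then lam / (1 - lam * γ) else 0)
    (hwnu : ∀ n, wnu n = if n < K then (1 - lam) / (1 - lam * γ) else 1) :
    ∀ n, 1 ≤ n → n ≤ K →
      xiNu γ ν n = wxi n * pH n ∧ ν n = wnu n * pH n := by
  obtain ⟨hl0, hl1⟩ := hlam
  obtain ⟨hg0, hg1⟩ := hγ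
  have hlg1 : lam * γ < 1 := by nlinarith
  have hne : (1 : ℝ) - lam * γ ≠ 0 := by nlinarith
  have geom : ∀ m : ℕ, (1 - lam) * ∑ j ∈ Finset.range m, lam ^ j = 1 - lam ^ m := by
    intro m
    linear_combination (-1 : ℝ) * geom_sum_mul lam m
  intro n hn1 hnK
  have key : ∑ κ ∈ Finset.range n, γ ^ κ * ν (n - κ)
      = ∑ j ∈ Finset.range n, γ ^ (n - 1 - j) * ν (j + 1) := by
    rw [← Finset.sum_range_reflect (fun κ => γ ^ κ * ν (n - κ)) n]
    refine Finset.sum_congr rfl fun j hj => ?_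
    rw [Finset.mem_range] at hj
    congr 2
    omega
  rcases lt_or_eq_of_le hnK with hlt | heq
  · -- n < K
    have hterm : ∀ j ∈ Finset.range n, γ ^ (n - 1 - j) * ν (j + 1)
        = γ ^ (n - 1) * ((1 - lam) * lam ^ j) := by
      intro j hj
      rw [Finset.mem_range] at hj
      rw [hν (j + 1), if_pos ⟨by omega, by omega⟩]
      have hexp : γ ^ (n - 1 - j) * γ ^ j = γ ^ (n - 1) := by
        rw [← pow_add]; congr 1; omega
      have hj1 : j + 1 - 1 = j := rfl
      rw [hj1, mul_pow,
        show γ ^ (n - 1 - j) * ((1 - lam) * (lam ^ j * γ ^ j))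
          = γ ^ (n - 1 - j) * γ ^ j * ((1 - lam) * lam ^ j) by ring, hexp]
    have hsum : ∑ j ∈ Finset.range n, γ ^ (n - 1 - j) * ν (j + 1)
        = γ ^ (n - 1) * (1 - lam ^ n) := by
      rw [Finset.sum_congr rfl hterm, ← Finset.mul_sum, ← Finset.mul_sum, geom]
    have hlamn : lam ^ n = lam * lam ^ (n - 1) := by
      rw [← pow_succ']; congr 1; omega
    constructor
    · rw [xiNu, key, hsum, hwxi, hpH, if_pos hlt, if_pos ⟨hn1, hlt⟩]
      field_simp
      rw [hlamn, mul_pow]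
      ring
    · rw [hν, hwnu, hpH, if_pos ⟨hn1, hlt⟩, if_pos hlt, if_pos ⟨hn1, hlt⟩]
      field_simp
  · -- n = K
    subst heq
    obtain ⟨K', rfl⟩ : ∃ K', n = K' + 1 := ⟨n - 1, by omega⟩
    have hterm : ∀ j ∈ Finset.range K', γ ^ (K' + 1 - 1 - j) * ν (j + 1)
        = γ ^ K' * ((1 - lam) * lam ^ j) := by
      intro j hj
      rw [Finset.mem_range] at hj
      rw [hν (j + 1), if_pos ⟨by omega, by omega⟩]
      have hexp : γ ^ (K' + 1 - 1 - j) * γ ^ j = γ ^ K' := by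
        rw [← pow_add]; congr 1; omega
      have hj1 : j + 1 - 1 = j := rfl
      rw [hj1, mul_pow,
        show γ ^ (K' + 1 - 1 - j) * ((1 - lam) * (lam ^ j * γ ^ j))
          = γ ^ (K' + 1 - 1 - j) * γ ^ j * ((1 - lam) * lam ^ j) by ring, hexp]
    have hsum : ∑ j ∈ Finset.range (K' + 1), γ ^ (K' + 1 - 1 - j) * ν (j + 1)
        = γ ^ K' := by
      rw [Finset.sum_range_succ, Finset.sum_congr rfl hterm, ← Finset.mul_sum,
        ← Finset.mul_sum, geom, hν (K' + 1),
        if_neg (by omega : ¬(1 ≤ K' + 1 ∧ K' + 1 < K' + 1)), if_pos rfl]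
      have h2 : K' + 1 - 1 = K' := rfl
      have : K' + 1 - 1 - K' = 0 := by omega
      rw [this, h2, mul_pow]
      ring
    constructor
    · rw [xiNu, key, hsum, hwxi, if_neg (lt_irrefl _)]
      simp
    · simp [hν, hwnu, hpH]
end

section
/- Let λ ∈ [0,1), γ ∈ (0,1), and let r, q : ℕ → ℝ be bounded. Then all the following series converge absolutely and ∑_{k≥0} (λγ)^k·r(k) + (1−λ)·γ·∑_{k≥0} (λγ)^k·q(k) = (1−λ)·∑_{k≥0} λ^k·( ∑_{l=0}^{k} γ^l·r(l) + γ^(k+1)·q(k) ). In particular, the expectation of the single-step γ-MVE target under the geometric horizon model equals the expectation of the TD(λ) target with λ = γ̃/γ. -/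
private lemma aux_summable_abs {a : ℝ} (h0 : 0 ≤ a) (h1 : a < 1) {C : ℝ} {f : ℕ → ℝ}
    (hf : ∀ k, |f k| ≤ C) : Summable (fun k : ℕ => |a ^ k * f k|) := by
  apply Summable.of_nonneg_of_le (fun k => abs_nonneg _) (fun k => ?_)
    ((summable_geometric_of_lt_one h0 h1).mul_right C)
  rw [abs_mul, abs_pow, abs_of_nonneg h0]
  exact mul_le_mul_of_nonneg_left (hf k) (pow_nonneg h0 k)

private def auxF (lam γ : ℝ) (r : ℕ → ℝ) (k l : ℕ) : ℝ :=
  if l ≤ k then lam ^ k * (γ ^ l * r l) else 0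

private lemma aux_shift {a : ℝ} (h0 : 0 ≤ a) (h1 : a < 1) (l : ℕ) :
    (∑' k : ℕ, if l ≤ k then a ^ k else 0) = a ^ l * (1 - a)⁻¹ := by
  have hinj : Function.Injective (fun n : ℕ => n + l) := fun x y h => by simpa using h
  rw [← hinj.tsum_eq (f := fun k => if l ≤ k then a ^ k else 0)
    (by intro x hx
        have hlx : l ≤ x := by
          by_contra h
          simp [Nat.not_le.1 h, Nat.not_le, *] at hx
        exact ⟨x - l, by simp; omega⟩)]
  simp only [le_add_iff_nonneg_left, Nat.zero_le, if_true, pow_add]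
  rw [tsum_mul_right, tsum_geometric_of_lt_one h0 h1]
  ring

/-- The expectation of the single-step γ-MVE target under the geometric horizon
model equals the expectation of the TD(λ) target with `λ = γ̃/γ`:
`∑_{k≥0} (λγ)^k r(k) + (1−λ)γ ∑_{k≥0} (λγ)^k q(k)
  = (1−λ) ∑_{k≥0} λ^k (∑_{l=0}^k γ^l r(l) + γ^(k+1) q(k))`. -/
theorem gammaMVE_eq_tdLambda
    (lam γ : ℝ) (hlam : lam ∈ Set.Ico (0 : ℝ) 1) (hγ : γ ∈ Set.Ioo (0 : ℝ) 1)
    (r q : ℕ → ℝ) (hr : ∃ C, ∀ k, |r k| ≤ C) (hq : ∃ C, ∀ k, |q k| ≤ C) :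
    Summable (fun k : ℕ => |(lam * γ) ^ k * r k|) ∧
    Summable (fun k : ℕ => |(lam * γ) ^ k * q k|) ∧
    Summable (fun k : ℕ =>
      |lam ^ k * ((∑ l ∈ Finset.range (k + 1), γ ^ l * r l) + γ ^ (k + 1) * q k)|) ∧
    (∑' k : ℕ, (lam * γ) ^ k * r k)
        + (1 - lam) * γ * (∑' k : ℕ, (lam * γ) ^ k * q k)
      = (1 - lam) * ∑' k : ℕ,
          lam ^ k * ((∑ l ∈ Finset.range (k + 1), γ ^ l * r l) + γ ^ (k + 1) * q k) := by
  obtain ⟨hl0, hl1⟩ := hlam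
  obtain ⟨hγ0, hγ1⟩ := hγ
  obtain ⟨Cr, hCr⟩ := hr
  obtain ⟨Cq, hCq⟩ := hq
  have hγ0' : (0:ℝ) ≤ γ := le_of_lt hγ0
  have hCr0 : 0 ≤ Cr := le_trans (abs_nonneg _) (hCr 0)
  have hCq0 : 0 ≤ Cq := le_trans (abs_nonneg _) (hCq 0)
  have hlg0 : 0 ≤ lam * γ := mul_nonneg hl0 hγ0'
  have hlg1 : lam * γ < 1 := by nlinarith
  have S1 : Summable (fun k : ℕ => |(lam * γ) ^ k * r k|) := aux_summable_abs hlg0 hlg1 hCr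
  have S2 : Summable (fun k : ℕ => |(lam * γ) ^ k * q k|) := aux_summable_abs hlg0 hlg1 hCq
  -- bound for the TD(λ) term
  have hMr : ∀ k, |∑ l ∈ Finset.range (k + 1), γ ^ l * r l| ≤ Cr * (1 - γ)⁻¹ := by
    intro k
    calc |∑ l ∈ Finset.range (k + 1), γ ^ l * r l|
        ≤ ∑ l ∈ Finset.range (k + 1), |γ ^ l * r l| := Finset.abs_sum_le_sum_abs _ _
      _ ≤ ∑ l ∈ Finset.range (k + 1), γ ^ l * Cr := by
          refine Finset.sum_le_sum (fun l _ => ?_)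
          rw [abs_mul, abs_pow, abs_of_nonneg hγ0']
          exact mul_le_mul_of_nonneg_left (hCr l) (pow_nonneg hγ0' l)
      _ = (∑ l ∈ Finset.range (k + 1), γ ^ l) * Cr := by rw [Finset.sum_mul]
      _ ≤ (1 - γ)⁻¹ * Cr := by
          refine mul_le_mul_of_nonneg_right ?_ hCr0
          have := Summable.sum_le_tsum (f := fun l : ℕ => γ ^ l) (Finset.range (k + 1))
            (fun l _ => pow_nonneg hγ0' l) (summable_geometric_of_lt_one hγ0' hγ1)
          rwa [tsum_geometric_of_lt_one hγ0' hγ1] at this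
      _ = Cr * (1 - γ)⁻¹ := mul_comm _ _
  have hM : ∀ k, |(∑ l ∈ Finset.range (k + 1), γ ^ l * r l) + γ ^ (k + 1) * q k|
      ≤ Cr * (1 - γ)⁻¹ + Cq := by
    intro k
    have h1 := hMr k
    have h2 : |γ ^ (k + 1) * q k| ≤ Cq := by
      rw [abs_mul, abs_pow, abs_of_nonneg hγ0']
      calc γ ^ (k + 1) * |q k| ≤ 1 * |q k| := by
            refine mul_le_mul_of_nonneg_right (pow_le_one₀ hγ0' (le_of_lt hγ1)) (abs_nonneg _)
        _ ≤ Cq := by rw [one_mul]; exact hCq k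
    exact (abs_add_le _ _).trans (add_le_add h1 h2)
  have S3 : Summable (fun k : ℕ =>
      |lam ^ k * ((∑ l ∈ Finset.range (k + 1), γ ^ l * r l) + γ ^ (k + 1) * q k)|) :=
    aux_summable_abs hl0 hl1 hM
  refine ⟨S1, S2, S3, ?_⟩
  -- summability of the pieces
  have SA : Summable (fun k : ℕ => lam ^ k * ∑ l ∈ Finset.range (k + 1), γ ^ l * r l) := by
    exact (aux_summable_abs hl0 hl1 (C := Cr * (1 - γ)⁻¹) hMr).of_abs
  have SB : Summable (fun k : ℕ => lam ^ k * (γ ^ (k + 1) * q k)) := by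
    have : (fun k : ℕ => lam ^ k * (γ ^ (k + 1) * q k))
        = fun k : ℕ => γ * ((lam * γ) ^ k * q k) := by
      funext k; rw [mul_pow]; ring
    rw [this]
    exact (S2.of_abs).mul_left γ
  -- Fubini for the r-part
  set F : ℕ → ℕ → ℝ := auxF lam γ r with hFdef
  have hFsum : Summable (Function.uncurry F) := by
    refine Summable.of_abs (Summable.of_nonneg_of_le (fun p => abs_nonneg _) (fun p => ?_)
      ((summable_geometric_of_lt_one hl0 hl1).mul_of_nonneg
        ((summable_geometric_of_lt_one hγ0' hγ1).mul_right Cr)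
        (fun k => pow_nonneg hl0 k)
        (fun l => mul_nonneg (pow_nonneg hγ0' l) hCr0)))
    show |F p.1 p.2| ≤ lam ^ p.1 * (γ ^ p.2 * Cr)
    by_cases h : p.2 ≤ p.1
    · simp only [hFdef, auxF, if_pos h]
      rw [abs_mul, abs_mul, abs_pow, abs_pow, abs_of_nonneg hl0, abs_of_nonneg hγ0']
      exact mul_le_mul_of_nonneg_left
        (mul_le_mul_of_nonneg_left (hCr p.2) (pow_nonneg hγ0' p.2)) (pow_nonneg hl0 p.1)
    · simp only [hFdef, auxF, if_neg h, abs_zero]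
      positivity
  have hrow : ∀ k, Summable (fun l => F k l) := by
    intro k
    apply summable_of_ne_finset_zero (s := Finset.range (k + 1))
    intro l hl
    simp only [Finset.mem_range] at hl
    simp only [hFdef, auxF]
    rw [if_neg (by omega)]
  have hcol : ∀ l, Summable (fun k => F k l) := by
    intro l
    have : (fun k => F k l) = fun k => (if l ≤ k then lam ^ k else 0) * (γ ^ l * r l) := by
      funext k; simp only [hFdef, auxF]; split <;> simp
    rw [this]
    refine Summable.mul_right _ (Summable.of_nonneg_of_le
      (fun k => by positivity) (fun k => ?_) (summable_geometric_of_lt_one hl0 hl1))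
    split
    · exact le_refl _
    · positivity
  have hswap : ∑' l, ∑' k, F k l = ∑' k, ∑' l, F k l := Summable.tsum_comm' hFsum hrow hcol
  have hrowval : ∀ k, (∑' l, F k l) = lam ^ k * ∑ l ∈ Finset.range (k + 1), γ ^ l * r l := by
    intro k
    rw [tsum_eq_sum (s := Finset.range (k + 1))
      (by intro l hl
          simp only [Finset.mem_range] at hl
          simp only [hFdef, auxF]
          rw [if_neg (by omega)])]
    rw [Finset.mul_sum]
    refine Finset.sum_congr rfl (fun l hl => ?_)
    simp only [Finset.mem_range] at hl
    simp only [hFdef, auxF]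
    rw [if_pos (by omega)]
  have hcolval : ∀ l, (∑' k, F k l) = (lam * γ) ^ l * r l * (1 - lam)⁻¹ := by
    intro l
    have : (fun k => F k l) = fun k => (if l ≤ k then lam ^ k else 0) * (γ ^ l * r l) := by
      funext k; simp only [hFdef, auxF]; split <;> simp
    rw [this, tsum_mul_right, aux_shift hl0 hl1 l, mul_pow]
    ring
  have hA : (∑' k : ℕ, lam ^ k * ∑ l ∈ Finset.range (k + 1), γ ^ l * r l)
      = (∑' l : ℕ, (lam * γ) ^ l * r l) * (1 - lam)⁻¹ := by
    calc (∑' k : ℕ, lam ^ k * ∑ l ∈ Finset.range (k + 1), γ ^ l * r l)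
        = ∑' k, ∑' l, F k l := by rw [tsum_congr hrowval]
      _ = ∑' l, ∑' k, F k l := hswap.symm
      _ = ∑' l, (lam * γ) ^ l * r l * (1 - lam)⁻¹ := tsum_congr hcolval
      _ = (∑' l : ℕ, (lam * γ) ^ l * r l) * (1 - lam)⁻¹ := tsum_mul_right
  have hB : (∑' k : ℕ, lam ^ k * (γ ^ (k + 1) * q k))
      = γ * ∑' k : ℕ, (lam * γ) ^ k * q k := by
    rw [← tsum_mul_left]
    refine tsum_congr (fun k => ?_)
    rw [mul_pow]; ring
  have hsplit : (∑' k : ℕ,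
      lam ^ k * ((∑ l ∈ Finset.range (k + 1), γ ^ l * r l) + γ ^ (k + 1) * q k))
      = (∑' k : ℕ, lam ^ k * ∑ l ∈ Finset.range (k + 1), γ ^ l * r l)
        + ∑' k : ℕ, lam ^ k * (γ ^ (k + 1) * q k) := by
    rw [← Summable.tsum_add SA SB]
    exact tsum_congr (fun k => by ring)
  rw [hsplit, mul_add, hA, hB]
  have h1l : (1 : ℝ) - lam ≠ 0 := by linarith
  field_simp
end
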